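/- arXiv:2602.08568 — 2 statements merged into one kernel-verified Lean document; each statement's English description precedes it below -/
import Mathlib

section
/- Let $M$ be a positive integer and let $d_1, \ldots, d_k$ be positive integers with $d_1 = 2$ and $d_m = M(\sum_{i=1}^{m-1} d_i) + 1$ for $m \geq 2$. Then the set $\{d_1,\ldots,d_k\}$ is $M$-linearly independent: for all integers $\ell_1,\ldots,\ell_k$ with $|\ell_m| < M$ for each $m$, if $\sum_{m=1}^k \ell_m d_m = 0$ then $\ell_m = 0$ for all $m$. -/
/-- A set of integers `d 0, …, d (k-1)` is `M`-linearly independent if any integer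
combination with coefficients in `(-M, M)` that vanishes has all coefficients zero. -/
def MLinIndep (M : ℤ) (k : ℕ) (d : ℕ → ℤ) : Prop :=
  ∀ ℓ : ℕ → ℤ, (∀ m < k, |ℓ m| < M) →
    (∑ m ∈ Finset.range k, ℓ m * d m) = 0 → ∀ m < k, ℓ m = 0

lemma sum_bound (M : ℤ) (n : ℕ) (d ℓ : ℕ → ℤ) (hpos : ∀ m < n, 0 < d m)
    (hℓ : ∀ m < n, |ℓ m| < M) :
    |∑ m ∈ Finset.range n, ℓ m * d m| ≤ (M - 1) * ∑ m ∈ Finset.range n, d m := by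
  calc |∑ m ∈ Finset.range n, ℓ m * d m|
      ≤ ∑ m ∈ Finset.range n, |ℓ m * d m| := Finset.abs_sum_le_sum_abs _ _
    _ ≤ ∑ m ∈ Finset.range n, (M - 1) * d m := by
        apply Finset.sum_le_sum
        intro i hi
        rw [Finset.mem_range] at hi
        rw [abs_mul, abs_of_pos (hpos i hi)]
        have := hℓ i hi
        have : |ℓ i| ≤ M - 1 := by omega
        exact mul_le_mul_of_nonneg_right this (le_of_lt (hpos i hi))
    _ = (M - 1) * ∑ m ∈ Finset.range n, d m := by rw [Finset.mul_sum]

theorem stmt0 (M : ℤ) (hM : 0 < M) (k : ℕ) (hk : 0 < k) (d : ℕ → ℤ)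
    (hpos : ∀ m < k, 0 < d m)
    (h0 : d 0 = 2)
    (hrec : ∀ m, 1 ≤ m → m < k → d m = M * (∑ i ∈ Finset.range m, d i) + 1) :
    MLinIndep M k d := by
  induction k with
  | zero => omega
  | succ n ih =>
    intro ℓ hℓ hsum m hm
    rcases Nat.eq_zero_or_pos n with rfl | hn
    · -- k = 1
      interval_cases m
      rw [Finset.sum_range_one, h0] at hsum
      omega
    · -- n ≥ 1 : first show ℓ n = 0
      rw [Finset.sum_range_succ] at hsum
      have hb := sum_bound M n d ℓ (fun i hi => hpos i (by omega))
        (fun i hi => hℓ i (by omega))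
      have hSpos : 0 < ∑ i ∈ Finset.range n, d i := by
        apply Finset.sum_pos (fun i hi => hpos i (by
          rw [Finset.mem_range] at hi; omega))
        exact ⟨0, Finset.mem_range.mpr hn⟩
      have hdn : d n = M * (∑ i ∈ Finset.range n, d i) + 1 := hrec n hn (by omega)
      have hℓn : ℓ n = 0 := by
        by_contra hne
        have h1 : 1 ≤ |ℓ n| := by rcases abs_cases (ℓ n) with ⟨h,_⟩|⟨h,_⟩ <;> omega
        have : |ℓ n * d n| ≥ d n := by
          rw [abs_mul, abs_of_pos (hpos n (by omega))]
          nlinarith [hpos n (Nat.lt_succ_self n)]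
        have heq : ℓ n * d n = -(∑ m ∈ Finset.range n, ℓ m * d m) := by linarith
        have : |ℓ n * d n| = |∑ m ∈ Finset.range n, ℓ m * d m| := by
          rw [heq, abs_neg]
        nlinarith [abs_nonneg (∑ m ∈ Finset.range n, ℓ m * d m)]
      rcases Nat.lt_succ_iff_lt_or_eq.mp hm with hm' | rfl
      · have hsum' : ∑ m ∈ Finset.range n, ℓ m * d m = 0 := by
          rw [hℓn] at hsum; linarith
        exact ih hn (fun i hi => hpos i (by omega))
          (fun i h1 h2 => hrec i h1 (by omega)) ℓ
          (fun i hi => hℓ i (by omega)) hsum' m hm'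
      · exact hℓn
end

section
/- Let $M$ be a positive integer and let $\{d_m\}_{m=1}^k$ be an $M$-linearly independent set of positive integers. For each $m$, let $V_m = \{a_m + j d_m : 0 \leq j \leq M-1\}$ be an arithmetic progression of length $M$ with common difference $d_m$ and first term $a_m \in \mathbb{Z}$. Then the sumset $V_1 + V_2 + \cdots + V_k$ has cardinality exactly $\prod_{m=1}^k |V_m| = M^k$. -/
theorem stmt2 (M : ℕ) (hM : 0 < M) (k : ℕ) (d : ℕ → ℤ)
    (hpos : ∀ m < k, 0 < d m)
    (hLI : MLinIndep (M : ℤ) k d)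
    (a : ℕ → ℤ)
    -- `V m = {a m + j * d m : 0 ≤ j ≤ M - 1}`; the sumset `V 0 + ⋯ + V (k-1)` is the image
    -- of all choices of `j : Fin k → Fin M` under the total sum.
    (S : Finset ℤ)
    (hS : S = Finset.image
      (fun j : Fin k → Fin M => ∑ m : Fin k, (a m + (j m : ℤ) * d m)) Finset.univ) :
    S.card = M ^ k := by
  have hinj : Function.Injective
      (fun j : Fin k → Fin M => ∑ m : Fin k, (a m + (j m : ℤ) * d m)) := by
    intro j j' h
    simp only [Finset.sum_add_distrib] at h
    have hsum : ∑ m : Fin k, ((j m : ℤ) - (j' m : ℤ)) * d m = 0 := by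
      simp only [sub_mul]
      rw [Finset.sum_sub_distrib]
      omega
    set ℓ : ℕ → ℤ := fun m => if hm : m < k then (j ⟨m, hm⟩ : ℤ) - (j' ⟨m, hm⟩ : ℤ) else 0
      with hℓ
    have hz : ∀ m < k, ℓ m = 0 := by
      apply hLI
      · intro m hm
        simp only [hℓ, dif_pos hm, abs_sub_lt_iff]
        constructor <;> [have := (j' ⟨m, hm⟩).isLt; have := (j ⟨m, hm⟩).isLt] <;> omega
      · rw [Finset.sum_range fun i => ℓ i * d i]
        rw [← hsum]
        apply Finset.sum_congr rfl
        intro m _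
        simp [hℓ, m.isLt]
    funext m
    have := hz m m.isLt
    simp only [hℓ, dif_pos m.isLt, Fin.eta] at this
    have : (j m : ℤ) = (j' m : ℤ) := by omega
    exact Fin.ext (by exact_mod_cast this)
  rw [hS, Finset.card_image_of_injective _ hinj, Finset.card_univ,
    Fintype.card_fun, Fintype.card_fin, Fintype.card_fin]
end
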